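/- Let L be a complete lattice and O : L → ℘(L) a ⪯ˢ-monotonic, downward-closed non-deterministic operator. Then O admits a ≤-minimal fixpoint: there exists w ∈ L with w ∈ O(w) such that no w' < w satisfies w' ∈ O(w'). -/

import Mathlib

/-!
The pre-fixpoints of `O` contain `⊤` and are closed under infima of nonempty chains, so Zorn's
lemma yields a minimal pre-fixpoint `w`. Pick `x ∈ O w` with `x ≤ w`: by monotonicity
`O x ⪯ˢ O w ∋ x`, so `x` is a pre-fixpoint too, hence `x = w` and `w ∈ O w`. Since every fixpoint
is a pre-fixpoint, `w` is also minimal among fixpoints.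
-/

/-- The Smyth order: `X ⪯ˢ Y` iff every `y ∈ Y` has some `x ∈ X` with `x ≤ y`. -/
def SmythLE {L : Type*} [Preorder L] (X Y : Set L) : Prop :=
  ∀ y ∈ Y, ∃ x ∈ X, x ≤ y

/-- A non-deterministic operator is downward closed if for every nonempty chain
of pre-fixpoints, the infimum of the chain is again a pre-fixpoint. -/
def DownwardClosed {L : Type*} [CompleteLattice L] (O : L → Set L) : Prop :=
  ∀ C : Set L, C.Nonempty → IsChain (· ≤ ·) C →
    (∀ w ∈ C, SmythLE (O w) {w}) → SmythLE (O (sInf C)) {sInf C}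

theorem zorn_ge_nonempty₀ {α : Type*} [Preorder α] (s : Set α)
    (ih : ∀ c ⊆ s, IsChain (· ≤ ·) c → ∀ y ∈ c, ∃ lb ∈ s, ∀ z ∈ c, lb ≤ z) (x : α) (hxs : x ∈ s) :
    ∃ m, m ≤ x ∧ Minimal (· ∈ s) m :=
  zorn_le_nonempty₀ (α := αᵒᵈ) s (fun c hcs hc y hy => ih c hcs hc.symm y hy) x hxs

theorem smythLE_singleton_iff {L : Type*} [Preorder L] {X : Set L} {w : L} :
    SmythLE X {w} ↔ ∃ x ∈ X, x ≤ w := by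
  simp [SmythLE]

section PreFixpoint

variable {L : Type*}

def IsPreFixpoint [Preorder L] (O : L → Set L) (w : L) : Prop :=
  SmythLE (O w) {w}

variable [CompleteLattice L] {O : L → Set L} {w : L}

theorem isPreFixpoint_of_mem (h : w ∈ O w) : IsPreFixpoint O w :=
  smythLE_singleton_iff.2 ⟨w, h, le_rfl⟩

theorem isPreFixpoint_top (hne : (O ⊤).Nonempty) : IsPreFixpoint O ⊤ :=
  smythLE_singleton_iff.2 ⟨hne.some, hne.some_mem, le_top⟩

theorem exists_minimal_isPreFixpoint (hne : (O ⊤).Nonempty) (hdc : DownwardClosed O) :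
    ∃ w, Minimal (IsPreFixpoint O) w := by
  obtain ⟨w, -, hw⟩ := zorn_ge_nonempty₀ {w | IsPreFixpoint O w}
    (fun c hcs hc y hy => ⟨sInf c, hdc c ⟨y, hy⟩ hc hcs, fun _ => sInf_le⟩) ⊤ (isPreFixpoint_top hne)
  exact ⟨w, hw⟩

theorem mem_of_minimal_isPreFixpoint (hmono : ∀ x y : L, x ≤ y → SmythLE (O x) (O y))
    (hw : Minimal (IsPreFixpoint O) w) : w ∈ O w := by
  obtain ⟨x, hxO, hxw⟩ := smythLE_singleton_iff.1 hw.prop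
  have hx : IsPreFixpoint O x := smythLE_singleton_iff.2 (hmono x w hxw x hxO)
  exact hw.eq_of_le hx hxw ▸ hxO

theorem minimal_mem_of_minimal_isPreFixpoint (hmono : ∀ x y : L, x ≤ y → SmythLE (O x) (O y))
    (hw : Minimal (IsPreFixpoint O) w) : Minimal (fun v => v ∈ O v) w :=
  hw.mono (fun _ => isPreFixpoint_of_mem) (mem_of_minimal_isPreFixpoint hmono hw)

end PreFixpoint

/-- A `⪯ˢ`-monotonic, downward-closed non-deterministic operator on a complete
lattice admits a `≤`-minimal fixpoint. -/
theorem downward_closed_admits_minimal_fixpoint {L : Type*} [CompleteLattice L]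
    (O : L → Set L)
    (hne : ∀ x : L, (O x).Nonempty)
    (hmono : ∀ x y : L, x ≤ y → SmythLE (O x) (O y))
    (hdc : DownwardClosed O) :
    ∃ w : L, w ∈ O w ∧ ¬ ∃ w' : L, w' < w ∧ w' ∈ O w' := by
  obtain ⟨w, hw⟩ := exists_minimal_isPreFixpoint (hne ⊤) hdc
  have hfix := minimal_mem_of_minimal_isPreFixpoint hmono hw
  exact ⟨w, hfix.prop, fun ⟨_, hlt, hw'⟩ => hfix.not_lt hw' hlt⟩
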